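/- If r > 3/√11 - 1/2, then the Moser spindle can be embedded in the open annulus {p : 1/2 - r < ‖p‖ < 1/2 + r}: there exist seven points in the open annulus whose unit-distance graph is the Moser spindle. -/

import Mathlib

/-!
Put vertex `0` and the two far tips `3`, `6` of the spindle on the circle of radius `3 / √11`
about the origin: they form an isosceles triangle with sides `√3, √3, 1`, whose circumradius is
`3 / √11`. The four middle vertices then lie strictly inside that circle and at distance more
than `1 / 5` from the origin, so all seven points lie in the annulus as soon as
`1 / 2 + r > 3 / √11`. The coordinates are built from `√3` and `√11`, so every squared distance
has the form `p + q √33` with `p, q` rational, and `5.7 < √33 < 5.8` decides which of them equal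
`1`. Injectivity comes for free, since no two vertices of the spindle have the same neighbours.
-/

def openAnnulus (r : ℝ) : Set ℂ := {p : ℂ | 1 / 2 - r < ‖p‖ ∧ ‖p‖ < 1 / 2 + r}

/-- The adjacency relation of the Moser spindle on vertex set `Fin 7`:
two rhombi `0-1-2-3` and `0-4-5-6` (each a pair of unit equilateral triangles sharing an
edge) joined at the common vertex `0`, with the far tips `3` and `6` adjacent. -/
def moserAdj (i j : Fin 7) : Prop :=
  ({i.val, j.val} : Finset ℕ) ∈
    ({{0, 1}, {0, 2}, {1, 2}, {1, 3}, {2, 3},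
      {0, 4}, {0, 5}, {4, 5}, {4, 6}, {5, 6}, {3, 6}} : Finset (Finset ℕ))

theorem injective_of_norm_sub_eq_one_iff {ι E : Type*} [Norm E] [Sub E] {G : ι → ι → Prop}
    {v : ι → E} (hv : ∀ i j, ‖v i - v j‖ = 1 ↔ G i j)
    (hG : ∀ i j, (∀ k, G i k ↔ G j k) → i = j) : Function.Injective v :=
  fun i j h => hG i j fun k => by rw [← hv, ← hv, h]

theorem eq_of_forall_moserAdj_iff : ∀ i j : Fin 7, (∀ k, moserAdj i k ↔ moserAdj j k) → i = j := by
  unfold moserAdj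
  decide

theorem mem_openAnnulus_of_norm_le {r R : ℝ} {p : ℂ} (hr : R - 1 / 2 < r) (hlo : 1 - R < ‖p‖)
    (hhi : ‖p‖ ≤ R) : p ∈ openAnnulus r :=
  ⟨by linarith, by linarith⟩

theorem four_fifths_lt_three_div_sqrt_eleven : 4 / 5 < 3 / √11 := by
  have h : √11 < 15 / 4 := by rw [Real.sqrt_lt' (by norm_num)]; norm_num
  rw [lt_div_iff₀ (by positivity)]
  linarith

theorem sqrt_three_mul_sqrt_eleven_mem_Ioo : √3 * √11 ∈ Set.Ioo (57 / 10) (58 / 10) := by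
  rw [← Real.sqrt_mul (by norm_num)]
  constructor
  · rw [Real.lt_sqrt (by norm_num)]; norm_num
  · rw [Real.sqrt_lt' (by norm_num)]; norm_num

/- The triangle `0, 3, 6` has its circumcentre at the origin; `1, 2` (resp. `4, 5`) are the
midpoint of the long diagonal `0-3` (resp. `0-6`) moved by `1 / 2` either way along the unit
normal to it. -/
noncomputable def moserVertex : Fin 7 → ℂ :=
  ![⟨0, -3 * √11 / 11⟩,
    ⟨1 / 4 - √3 * √11 / 12, √3 / 12 - √11 / 44⟩,
    ⟨1 / 4 + √3 * √11 / 12, -√3 / 12 - √11 / 44⟩,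
    ⟨1 / 2, 5 * √11 / 22⟩,
    ⟨-1 / 4 + √3 * √11 / 12, √3 / 12 - √11 / 44⟩,
    ⟨-1 / 4 - √3 * √11 / 12, -√3 / 12 - √11 / 44⟩,
    ⟨-1 / 2, 5 * √11 / 22⟩]

theorem normSq_moserVertex_sub_eq_one_iff (i j : Fin 7) :
    Complex.normSq (moserVertex i - moserVertex j) = 1 ↔ moserAdj i j := by
  have h3 : √3 ^ 2 = 3 := Real.sq_sqrt (by norm_num)
  have h11 : √11 ^ 2 = 11 := Real.sq_sqrt (by norm_num)
  obtain ⟨hlo, hhi⟩ := sqrt_three_mul_sqrt_eleven_mem_Ioo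
  fin_cases i <;> fin_cases j <;> simp +decide [moserVertex, moserAdj, Complex.normSq_apply] <;>
    ring_nf <;> simp only [h3, h11] <;> norm_num <;> intro h <;> linarith

theorem normSq_moserVertex_mem_Ioc (i : Fin 7) :
    Complex.normSq (moserVertex i) ∈ Set.Ioc (1 / 25) (9 / 11) := by
  have h3 : √3 ^ 2 = 3 := Real.sq_sqrt (by norm_num)
  have h11 : √11 ^ 2 = 11 := Real.sq_sqrt (by norm_num)
  obtain ⟨hlo, hhi⟩ := sqrt_three_mul_sqrt_eleven_mem_Ioo
  fin_cases i <;> simp [moserVertex, Complex.normSq_apply] <;> ring_nf <;> simp only [h3, h11] <;>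
    norm_num <;> constructor <;> linarith

theorem norm_moserVertex_sub_eq_one_iff (i j : Fin 7) :
    ‖moserVertex i - moserVertex j‖ = 1 ↔ moserAdj i j := by
  rw [← pow_eq_one_iff_of_nonneg (norm_nonneg _) two_ne_zero, Complex.sq_norm,
    normSq_moserVertex_sub_eq_one_iff]

theorem norm_moserVertex_mem_Ioc (i : Fin 7) : ‖moserVertex i‖ ∈ Set.Ioc (1 / 5) (3 / √11) := by
  obtain ⟨hlo, hhi⟩ := normSq_moserVertex_mem_Ioc i
  rw [← Complex.sq_norm] at hlo hhi
  constructor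
  · exact (pow_lt_pow_iff_left₀ (by norm_num) (norm_nonneg _) two_ne_zero).1 (by linarith)
  · refine (pow_le_pow_iff_left₀ (norm_nonneg _) (by positivity) two_ne_zero).1 ?_
    rw [div_pow, Real.sq_sqrt (by norm_num)]
    linarith

theorem moser_spindle_in_open_annulus (r : ℝ) (hr : 3 / Real.sqrt 11 - 1 / 2 < r) :
    ∃ v : Fin 7 → ℂ, Function.Injective v ∧
      (∀ i, v i ∈ openAnnulus r) ∧
      ∀ i j, ‖v i - v j‖ = 1 ↔ moserAdj i j := by
  refine ⟨moserVertex, injective_of_norm_sub_eq_one_iff norm_moserVertex_sub_eq_one_iff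
    eq_of_forall_moserAdj_iff, fun i => ?_, norm_moserVertex_sub_eq_one_iff⟩
  obtain ⟨hlo, hhi⟩ := norm_moserVertex_mem_Ioc i
  have := four_fifths_lt_three_div_sqrt_eleven
  exact mem_openAnnulus_of_norm_le hr (by linarith) hhi
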